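/- Let F : C^{n×n} → C^{n×n} be a linear map that is self-adjoint with respect to the inner product ⟨R,T⟩ = n⁻¹ Tr(R*T) and preserves the cone of positive semidefinite matrices. Then there exists a positive semidefinite matrix F₀ with ⟨F₀,F₀⟩ = 1 such that F[F₀] = ‖F‖_sp · F₀, where ‖F‖_sp is the operator norm of F induced by the Hilbert–Schmidt norm. -/

import Mathlib

/-!
Vectorize matrices isometrically (for the normalized Hilbert–Schmidt norm) into
`EuclideanSpace ℂ (Fin n × Fin n)`; there `F` becomes a self-adjoint operator `G` with
`‖G‖ = ‖F‖_sp`, so `G` has a real eigenvalue `μ` with `|μ| = ‖G‖`. A positive map commutes with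
`ᴴ`, hence the real or the imaginary part of an eigenmatrix is a Hermitian eigenmatrix
`H = A - B`, split into positive and negative parts with `B * A = 0`. By positivity all four
cross terms `re ⟪F X, Y⟫`, `X, Y ∈ {A, B}`, are nonnegative, so `P = A + B` has the norm of `H` and
`re ⟪F P, P⟫ ≥ |⟪F H, H⟫| = ‖G‖ ‖P‖²`. Equality in `re ⟪G x, x⟫ ≤ ‖G‖ ‖x‖²` forces `G x = ‖G‖ x`.
-/

open Matrix
open scoped ComplexOrder

/-- The normalized Hilbert–Schmidt norm `‖R‖_hs = (n⁻¹ Tr(R*R))^{1/2}` of a matrix. -/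
noncomputable def hsNorm {n : ℕ} (R : Matrix (Fin n) (Fin n) ℂ) : ℝ :=
  Real.sqrt ((n : ℝ)⁻¹ * (Matrix.trace (Rᴴ * R)).re)

/-- The operator norm of a linear map on matrices induced by the Hilbert–Schmidt norm. -/
noncomputable def spNorm {n : ℕ}
    (F : Matrix (Fin n) (Fin n) ℂ →ₗ[ℂ] Matrix (Fin n) (Fin n) ℂ) : ℝ :=
  sSup {c : ℝ | ∃ R : Matrix (Fin n) (Fin n) ℂ, hsNorm R = 1 ∧ c = hsNorm (F R)}

open scoped InnerProductSpace ComplexStarModule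

section InnerProductSpace

variable {𝕜 E : Type*} [RCLike 𝕜] [NormedAddCommGroup E] [InnerProductSpace 𝕜 E]

open RCLike

theorem ContinuousLinearMap.apply_eq_norm_smul_of_le_re_inner (T : E →L[𝕜] E) {x : E}
    (h : ‖T‖ * ‖x‖ ^ 2 ≤ re ⟪T x, x⟫_𝕜) : T x = (‖T‖ : 𝕜) • x := by
  have hTx : ‖T x‖ ≤ ‖T‖ * ‖x‖ := T.le_opNorm x
  have hsq : ‖T x - (‖T‖ : 𝕜) • x‖ ^ 2 ≤ 0 := by
    rw [@norm_sub_sq 𝕜, inner_smul_right, re_ofReal_mul, norm_smul, norm_ofReal,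
      abs_of_nonneg (norm_nonneg T)]
    nlinarith [norm_nonneg T, norm_nonneg (T x), norm_nonneg x]
  rwa [sq_nonpos_iff, norm_eq_zero, sub_eq_zero] at hsq

theorem ContinuousLinearMap.abs_re_inner_sub_le (T : E →L[𝕜] E) {u v : E}
    (huu : 0 ≤ re ⟪T u, u⟫_𝕜) (huv : 0 ≤ re ⟪T u, v⟫_𝕜) (hvu : 0 ≤ re ⟪T v, u⟫_𝕜)
    (hvv : 0 ≤ re ⟪T v, v⟫_𝕜) :
    |re ⟪T (u - v), u - v⟫_𝕜| ≤ re ⟪T (u + v), u + v⟫_𝕜 := by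
  simp only [map_sub, map_add, inner_sub_left, inner_sub_right, inner_add_left, inner_add_right]
  rw [abs_le]
  constructor <;> linarith

end InnerProductSpace

theorem IsSelfAdjoint.exists_eigenvector_abs_eq_norm {E : Type*} [NormedAddCommGroup E]
    [InnerProductSpace ℂ E] [FiniteDimensional ℂ E] [Nontrivial E] {T : E →L[ℂ] E}
    (hT : IsSelfAdjoint T) : ∃ x ≠ 0, ∃ μ : ℝ, T x = (μ : ℂ) • x ∧ |μ| = ‖T‖ := by
  obtain ⟨z, hz, hzT⟩ := spectrum.exists_nnnorm_eq_spectralRadius T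
  rw [hT.spectralRadius_eq_nnnorm, ENNReal.coe_inj] at hzT
  rw [ContinuousLinearMap.spectrum_eq, ← Module.End.hasEigenvalue_iff_mem_spectrum] at hz
  have hreal : (z.re : ℂ) = z := Complex.conj_eq_iff_re.mp
    ((ContinuousLinearMap.isSelfAdjoint_iff_isSymmetric.mp hT).conj_eigenvalue_eq_self hz)
  obtain ⟨x, hx⟩ := hz.exists_hasEigenvector
  refine ⟨x, hx.2, z.re, ?_, ?_⟩
  · rw [hreal]
    exact hx.apply_eq_smul
  · rw [← Real.norm_eq_abs, ← Complex.norm_real, hreal]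
    exact congrArg NNReal.toReal hzT

theorem exists_isSelfAdjoint_eigenvector {A : Type*} [AddCommGroup A] [Module ℂ A]
    [StarAddMonoid A] [StarModule ℂ A] {f : A →ₗ[ℂ] A} (hf : ∀ a, f (star a) = star (f a))
    {a : A} (ha : a ≠ 0) {μ : ℝ} (hfa : f a = (μ : ℂ) • a) :
    ∃ b : A, IsSelfAdjoint b ∧ b ≠ 0 ∧ f b = (μ : ℂ) • b := by
  have hre : f (ℜ a) = (μ : ℂ) • (ℜ a : A) := by
    simp only [realPart_apply_coe, ← Complex.coe_smul, Complex.ofReal_inv, Complex.ofReal_ofNat,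
      smul_add, map_add, map_smul, hfa, hf, star_smul, RCLike.star_def, Complex.conj_ofReal]
    module
  have him : f (ℑ a) = (μ : ℂ) • (ℑ a : A) := by
    simp only [imaginaryPart_apply_coe, ← Complex.coe_smul, Complex.ofReal_inv,
      Complex.ofReal_ofNat, neg_smul, map_neg, map_smul, map_sub, hfa, hf, star_smul,
      RCLike.star_def, Complex.conj_ofReal]
    module
  by_cases h : (ℜ a : A) = 0
  · refine ⟨ℑ a, (ℑ a).2, fun h' ↦ ha ?_, him⟩
    rw [← realPart_add_I_smul_imaginaryPart a, h, h', smul_zero, add_zero]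
  · exact ⟨ℜ a, (ℜ a).2, h, hre⟩

section Vectorization

variable {m n 𝕜 : Type*} [RCLike 𝕜]

noncomputable def Matrix.toEuclideanSpace : Matrix m n 𝕜 ≃ₗ[𝕜] EuclideanSpace 𝕜 (m × n) :=
  (LinearEquiv.curry 𝕜 𝕜 m n).symm.trans (WithLp.linearEquiv 2 𝕜 _).symm

@[simp]
theorem Matrix.toEuclideanSpace_apply (R : Matrix m n 𝕜) (p : m × n) :
    R.toEuclideanSpace p = R p.1 p.2 := rfl

theorem Matrix.inner_toEuclideanSpace [Fintype m] [Fintype n] (R S : Matrix m n 𝕜) :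
    ⟪R.toEuclideanSpace, S.toEuclideanSpace⟫_𝕜 = trace (Rᴴ * S) := by
  simp only [PiLp.inner_apply, RCLike.inner_apply, trace, diag_apply, mul_apply,
    conjTranspose_apply, Fintype.sum_prod_type]
  rw [Finset.sum_comm]
  simp [mul_comm]

end Vectorization

noncomputable def hsEquiv (n : ℕ) [NeZero n] :
    Matrix (Fin n) (Fin n) ℂ ≃ₗ[ℂ] EuclideanSpace ℂ (Fin n × Fin n) :=
  toEuclideanSpace.trans <|
    LinearEquiv.smulOfNeZero ℂ _ ((Real.sqrt n)⁻¹ : ℝ) (by simp [NeZero.ne n])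

section HilbertSchmidt

variable {n : ℕ} [NeZero n]

theorem inner_hsEquiv (R S : Matrix (Fin n) (Fin n) ℂ) :
    ⟪hsEquiv n R, hsEquiv n S⟫_ℂ = (n : ℂ)⁻¹ * trace (Rᴴ * S) := by
  have hn : (Real.sqrt n : ℂ) * Real.sqrt n = n := by
    rw [← Complex.ofReal_mul, Real.mul_self_sqrt n.cast_nonneg, Complex.ofReal_natCast]
  simp only [hsEquiv, LinearEquiv.trans_apply, LinearEquiv.smulOfNeZero_apply, inner_smul_left,
    inner_smul_right, inner_toEuclideanSpace, Complex.ofReal_inv, map_inv₀, Complex.conj_ofReal,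
    ← hn]
  ring

theorem norm_hsEquiv (R : Matrix (Fin n) (Fin n) ℂ) : ‖hsEquiv n R‖ = hsNorm R := by
  rw [@norm_eq_sqrt_re_inner ℂ, inner_hsEquiv, hsNorm, RCLike.re_to_complex,
    ← Complex.ofReal_natCast, ← Complex.ofReal_inv, Complex.re_ofReal_mul]

noncomputable def hsOp (F : Matrix (Fin n) (Fin n) ℂ →ₗ[ℂ] Matrix (Fin n) (Fin n) ℂ) :
    EuclideanSpace ℂ (Fin n × Fin n) →L[ℂ] EuclideanSpace ℂ (Fin n × Fin n) :=
  LinearMap.toContinuousLinearMap ((hsEquiv n).conj F)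

variable {F : Matrix (Fin n) (Fin n) ℂ →ₗ[ℂ] Matrix (Fin n) (Fin n) ℂ}

@[simp]
theorem hsOp_hsEquiv (R : Matrix (Fin n) (Fin n) ℂ) :
    hsOp F (hsEquiv n R) = hsEquiv n (F R) := by
  simp [hsOp, LinearEquiv.conj_apply]

theorem hsOp_hsEquiv_eq_smul_iff {R : Matrix (Fin n) (Fin n) ℂ} {c : ℂ} :
    hsOp F (hsEquiv n R) = c • hsEquiv n R ↔ F R = c • R := by
  rw [hsOp_hsEquiv, ← map_smul, (hsEquiv n).injective.eq_iff]

theorem spNorm_eq_norm_hsOp : spNorm F = ‖hsOp F‖ := by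
  rw [← (hsOp F).sSup_sphere_eq_norm, spNorm]
  congr 1
  ext c
  constructor
  · rintro ⟨R, hR, rfl⟩
    exact ⟨hsEquiv n R, by simpa [norm_hsEquiv] using hR, by simp [norm_hsEquiv]⟩
  · rintro ⟨x, hx, rfl⟩
    obtain ⟨R, rfl⟩ := (hsEquiv n).surjective x
    exact ⟨R, by simpa [norm_hsEquiv] using hx, by simp [norm_hsEquiv]⟩

theorem isSelfAdjoint_hsOp (hF : ∀ R T : Matrix (Fin n) (Fin n) ℂ,
      (n : ℂ)⁻¹ * trace ((F R)ᴴ * T) = (n : ℂ)⁻¹ * trace (Rᴴ * F T)) :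
    IsSelfAdjoint (hsOp F) := by
  rw [ContinuousLinearMap.isSelfAdjoint_iff_isSymmetric]
  intro x y
  obtain ⟨R, rfl⟩ := (hsEquiv n).surjective x
  obtain ⟨T, rfl⟩ := (hsEquiv n).surjective y
  simpa [inner_hsEquiv] using hF R T

end HilbertSchmidt

section PositiveMaps

open scoped MatrixOrder

theorem Matrix.PosSemidef.trace_mul_nonneg {ι 𝕜 : Type*} [Fintype ι] [DecidableEq ι]
    [RCLike 𝕜] {A B : Matrix ι ι 𝕜} (hA : A.PosSemidef) (hB : B.PosSemidef) :
    0 ≤ (A * B).trace := by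
  have hS : (CFC.sqrt A)ᴴ = CFC.sqrt A := (CFC.sqrt_nonneg A).isSelfAdjoint
  have h := (hB.conjTranspose_mul_mul_same (CFC.sqrt A)).trace_nonneg
  rwa [hS, trace_mul_cycle, CFC.sqrt_mul_sqrt_self A hA.nonneg] at h

theorem Matrix.map_conjTranspose_of_posSemidef {ι : Type*} [Fintype ι] [DecidableEq ι]
    {F : Matrix ι ι ℂ →ₗ[ℂ] Matrix ι ι ℂ} (hF : ∀ R, R.PosSemidef → (F R).PosSemidef)
    (R : Matrix ι ι ℂ) : F Rᴴ = (F R)ᴴ :=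
  map_star (PositiveLinearMap.mk₀ F fun R hR ↦ (hF R hR.posSemidef).nonneg) R

variable {n : ℕ} [NeZero n] {F : Matrix (Fin n) (Fin n) ℂ →ₗ[ℂ] Matrix (Fin n) (Fin n) ℂ}

theorem re_inner_hsOp_nonneg (hF : ∀ R, R.PosSemidef → (F R).PosSemidef)
    {A B : Matrix (Fin n) (Fin n) ℂ} (hA : A.PosSemidef) (hB : B.PosSemidef) :
    0 ≤ RCLike.re ⟪hsOp F (hsEquiv n A), hsEquiv n B⟫_ℂ := by
  rw [hsOp_hsEquiv, inner_hsEquiv, (hF A hA).isHermitian.eq, RCLike.re_to_complex,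
    ← Complex.ofReal_natCast, ← Complex.ofReal_inv, Complex.re_ofReal_mul]
  exact mul_nonneg (by positivity) (Complex.nonneg_iff.mp ((hF A hA).trace_mul_nonneg hB)).1

theorem exists_posSemidef_abs_re_inner_hsOp_le (hF : ∀ R, R.PosSemidef → (F R).PosSemidef)
    {H : Matrix (Fin n) (Fin n) ℂ} (hH : H.IsHermitian) :
    ∃ P : Matrix (Fin n) (Fin n) ℂ, P.PosSemidef ∧ ‖hsEquiv n P‖ = ‖hsEquiv n H‖ ∧
      |RCLike.re ⟪hsOp F (hsEquiv n H), hsEquiv n H⟫_ℂ| ≤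
        RCLike.re ⟪hsOp F (hsEquiv n P), hsEquiv n P⟫_ℂ := by
  obtain ⟨A, B, hA, hB, rfl, hBA⟩ : ∃ A B : Matrix (Fin n) (Fin n) ℂ,
      A.PosSemidef ∧ B.PosSemidef ∧ A - B = H ∧ B * A = 0 :=
    ⟨H⁺, H⁻, (CFC.posPart_nonneg H).posSemidef, (CFC.negPart_nonneg H).posSemidef,
      CFC.posPart_sub_negPart H hH, CFC.negPart_mul_posPart H⟩
  have horth : ⟪hsEquiv n B, hsEquiv n A⟫_ℂ = 0 := by
    rw [inner_hsEquiv, hB.isHermitian.eq, hBA, trace_zero, mul_zero]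
  refine ⟨A + B, hA.add hB, ?_, ?_⟩
  · rw [map_add, map_sub, norm_sub_eq_norm_add horth]
  · rw [map_add, map_sub]
    exact (hsOp F).abs_re_inner_sub_le (re_inner_hsOp_nonneg hF hA hA)
      (re_inner_hsOp_nonneg hF hA hB) (re_inner_hsOp_nonneg hF hB hA)
      (re_inner_hsOp_nonneg hF hB hB)

theorem exists_posSemidef_hsNorm_eq_one {P : Matrix (Fin n) (Fin n) ℂ} (hP : P.PosSemidef)
    (hP0 : P ≠ 0) {c : ℂ} (hFP : F P = c • P) :
    ∃ F₀ : Matrix (Fin n) (Fin n) ℂ, F₀.PosSemidef ∧ hsNorm F₀ = 1 ∧ F F₀ = c • F₀ := by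
  have hnorm : 0 < hsNorm P := by
    rwa [← norm_hsEquiv, norm_pos_iff, (hsEquiv n).map_ne_zero_iff]
  refine ⟨(((hsNorm P)⁻¹ : ℝ) : ℂ) • P,
    hP.smul (Complex.zero_le_real.mpr (by positivity)), ?_, ?_⟩
  · rw [← norm_hsEquiv, map_smul, norm_smul, norm_hsEquiv, Complex.norm_real, Real.norm_eq_abs,
      abs_of_pos (inv_pos.mpr hnorm), inv_mul_cancel₀ hnorm.ne']
  · rw [map_smul, hFP, smul_comm]

end PositiveMaps

theorem stmt_7 {n : ℕ} (hn : 0 < n)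
    (F : Matrix (Fin n) (Fin n) ℂ →ₗ[ℂ] Matrix (Fin n) (Fin n) ℂ)
    (hFsa : ∀ R T : Matrix (Fin n) (Fin n) ℂ,
      (n : ℂ)⁻¹ * Matrix.trace ((F R)ᴴ * T) = (n : ℂ)⁻¹ * Matrix.trace (Rᴴ * F T))
    (hFpos : ∀ R : Matrix (Fin n) (Fin n) ℂ, R.PosSemidef → (F R).PosSemidef) :
    ∃ F₀ : Matrix (Fin n) (Fin n) ℂ, F₀.PosSemidef ∧ hsNorm F₀ = 1 ∧
      F F₀ = ((spNorm F : ℝ) : ℂ) • F₀ := by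
  have : NeZero n := ⟨hn.ne'⟩
  obtain ⟨x, hx0, μ, hx, hμ⟩ := (isSelfAdjoint_hsOp hFsa).exists_eigenvector_abs_eq_norm
  obtain ⟨H, hH, hH0, hFH⟩ := exists_isSelfAdjoint_eigenvector
    (Matrix.map_conjTranspose_of_posSemidef hFpos) ((hsEquiv n).symm.map_ne_zero_iff.mpr hx0)
    (hsOp_hsEquiv_eq_smul_iff.mp (by rwa [(hsEquiv n).apply_symm_apply]))
  obtain ⟨P, hP, hPH, hle⟩ := exists_posSemidef_abs_re_inner_hsOp_le hFpos hH
  refine exists_posSemidef_hsNorm_eq_one hP ?_ ?_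
  · rwa [← (hsEquiv n).map_ne_zero_iff, ← norm_ne_zero_iff, hPH, norm_ne_zero_iff,
      (hsEquiv n).map_ne_zero_iff]
  · rw [spNorm_eq_norm_hsOp, ← hsOp_hsEquiv_eq_smul_iff]
    refine (hsOp F).apply_eq_norm_smul_of_le_re_inner (le_trans (le_of_eq ?_) hle)
    rw [hsOp_hsEquiv_eq_smul_iff.mpr hFH, Complex.coe_smul, inner_smul_left_eq_smul,
      RCLike.smul_re, inner_self_eq_norm_sq, hPH, ← hμ, abs_mul,
      abs_of_nonneg (sq_nonneg ‖hsEquiv n H‖)]
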